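/- arXiv:1410.7693 — 5 statements merged into one kernel-verified Lean document; each statement's English description precedes it below -/
import Mathlib

section
/- If n is an integer, a segment in Z^3 connects centers of adjacent unit cubes, and for a pair of dominoes d0, d1 and direction u we define the effect τ^u(d0,d1) = (1/4)·det(v(d1), v(d0), u) when d1 meets the open u-shade of d0 and 0 otherwise, then for any two dominoes d0, d1 and any u in {±e1, ±e2, ±e3}, τ^u(d0,d1) = τ^{-u}(d1,d0). -/
open scoped BigOperators
noncomputable section

/-- Points of `ℝ³`. -/
abbrev R3 := Fin 3 → ℝ

/-- Euclidean inner product on `ℝ³`. -/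
def dot (x y : R3) : ℝ := ∑ i, x i * y i

/-- Determinant of the 3×3 matrix with rows `a`, `b`, `c`. -/
def det3 (a b c : R3) : ℝ := Matrix.det (Matrix.of ![a, b, c])

/-- The canonical basis vectors of `ℝ³`. -/
def stdR (i : Fin 3) : R3 := fun j => if j = i then 1 else 0

/-- `Φ`, the set of signed canonical basis vectors. -/
def PhiR : Set R3 := {u | ∃ i : Fin 3, u = stdR i ∨ u = -stdR i}

/-- A positively oriented basis with vectors in `Φ`. -/
def IsLatticeBasis (b1 b2 b3 : R3) : Prop :=
  b1 ∈ PhiR ∧ b2 ∈ PhiR ∧ b3 ∈ PhiR ∧ det3 b1 b2 b3 = 1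

/-- The basic (closed unit) cube with least corner `q ∈ ℤ³`. -/
def cubeSet (q : Fin 3 → ℤ) : Set R3 := {x | ∀ i, (q i : ℝ) ≤ x i ∧ x i ≤ q i + 1}

/-- The center of the basic cube with corner `q`. -/
def cubeCenter (q : Fin 3 → ℤ) : R3 := fun i => (q i : ℝ) + 1/2

/-- A basic cube is black when the coordinate sum of its corner is odd. -/
def cubeBlack (q : Fin 3 → ℤ) : Prop := Odd (q 0 + q 1 + q 2)

instance : DecidablePred cubeBlack := fun q => by unfold cubeBlack; infer_instance

/-- Color of a basic cube: `1` for black, `-1` for white. -/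
def col (q : Fin 3 → ℤ) : ℤ := if cubeBlack q then 1 else -1

/-- A region, given as a finite set of basic cubes (identified by corners),
realized as a subset of `ℝ³`. -/
def regionSet (R : Finset (Fin 3 → ℤ)) : Set R3 := ⋃ q ∈ R, cubeSet q

/-- A domino brick: two basic cubes sharing a face. -/
structure Domino where
  c1 : Fin 3 → ℤ
  c2 : Fin 3 → ℤ
  adj : (∑ i, |c1 i - c2 i|) = 1

instance : DecidableEq Domino := fun d e =>
  decidable_of_iff (d.c1 = e.c1 ∧ d.c2 = e.c2) (by cases d; cases e; simp)

/-- The two cubes of a domino. -/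
def Domino.cubes (d : Domino) : Finset (Fin 3 → ℤ) := {d.c1, d.c2}

/-- The domino as a subset of `ℝ³`. -/
def Domino.toSet (d : Domino) : Set R3 := cubeSet d.c1 ∪ cubeSet d.c2

/-- `v(d)`: the center of the black cube minus the center of the white cube. -/
def Domino.v (d : Domino) : R3 :=
  if cubeBlack d.c1 then (fun i => (d.c1 i : ℝ) - d.c2 i) else (fun i => (d.c2 i : ℝ) - d.c1 i)

/-- Two dominoes are the same up to the (irrelevant) ordering of their cubes. -/
def Domino.same (d e : Domino) : Prop :=
  (d.c1 = e.c1 ∧ d.c2 = e.c2) ∨ (d.c1 = e.c2 ∧ d.c2 = e.c1)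

/-- The open `u`-shade of a set `X ⊆ ℝ³`. -/
def shade (u : R3) (X : Set R3) : Set R3 :=
  interior ({y | ∃ x ∈ X, ∃ s : ℝ, 0 ≤ s ∧ y = x + s • u} \ X)

/-- The effect of the domino `d0` on the domino `d1` along `u`. -/
def tau (u : R3) (d0 d1 : Domino) : ℝ :=
  open scoped Classical in
  if (d1.toSet ∩ shade u d0.toSet).Nonempty then (1/4) * det3 d1.v d0.v u else 0

/-- The `u`-pretwist of a (finite set of) dominoes. -/
def T (u : R3) (t : Finset Domino) : ℝ := ∑ d0 ∈ t, ∑ d1 ∈ t, tau u d0 d1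

/-- `t` is a tiling of the region `R`: every domino lies in `R` and every cube
of `R` is covered by exactly one domino of `t`. -/
def IsTiling (R : Finset (Fin 3 → ℤ)) (t : Finset Domino) : Prop :=
  (∀ d ∈ t, d.c1 ∈ R ∧ d.c2 ∈ R) ∧
  ∀ q ∈ R, ∃! d, d ∈ t ∧ (q = d.c1 ∨ q = d.c2)

/-- Translation of a domino by an integer vector. -/
def Domino.translate (d : Domino) (b : Fin 3 → ℤ) : Domino :=
  ⟨fun i => d.c1 i + b i, fun i => d.c2 i + b i, by
    have h : ∀ i : Fin 3, |d.c1 i + b i - (d.c2 i + b i)| = |d.c1 i - d.c2 i| := by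
      intro i; ring_nf
    rw [Finset.sum_congr rfl fun i _ => h i]; exact d.adj⟩

/-- Reflection of a cube in the hyperplane `x_k = 0`. -/
def reflCube (k : Fin 3) (q : Fin 3 → ℤ) : Fin 3 → ℤ :=
  fun i => if i = k then -q i - 1 else q i

/-- Reflection of a domino in the hyperplane `x_k = 0`. -/
def Domino.reflect (d : Domino) (k : Fin 3) : Domino :=
  ⟨reflCube k d.c1, reflCube k d.c2, by
    have h : ∀ i : Fin 3, |reflCube k d.c1 i - reflCube k d.c2 i| = |d.c1 i - d.c2 i| := by
      intro i
      by_cases hik : i = k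
      · simp only [reflCube, if_pos hik]
        have h2 : -d.c1 i - 1 - (-d.c2 i - 1) = -(d.c1 i - d.c2 i) := by ring
        rw [h2, abs_neg]
      · simp [reflCube, hik]
    rw [Finset.sum_congr rfl fun i _ => h i]; exact d.adj⟩

/-- A signed-permutation rotation applied to a basic cube (acting on centers by
`y i = ε i * x (σ i)` and recording the new least corner). -/
def rotCube (σ : Equiv.Perm (Fin 3)) (ε : Fin 3 → ℤ) (q : Fin 3 → ℤ) : Fin 3 → ℤ :=
  fun i => if ε i = 1 then q (σ i) else -q (σ i) - 1

/-- A signed-permutation rotation applied to a domino. -/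
def Domino.rot (d : Domino) (σ : Equiv.Perm (Fin 3)) (ε : Fin 3 → ℤ) : Domino :=
  ⟨rotCube σ ε d.c1, rotCube σ ε d.c2, by
    have h : ∀ i : Fin 3, |rotCube σ ε d.c1 i - rotCube σ ε d.c2 i|
        = |d.c1 (σ i) - d.c2 (σ i)| := by
      intro i
      by_cases hi : ε i = 1
      · simp [rotCube, hi]
      · simp only [rotCube, if_neg hi]
        have h2 : -d.c1 (σ i) - 1 - (-d.c2 (σ i) - 1) = -(d.c1 (σ i) - d.c2 (σ i)) := by ring
        rw [h2, abs_neg]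
    rw [Finset.sum_congr rfl fun i _ => h i]
    rw [Equiv.sum_comp σ (fun j => |d.c1 j - d.c2 j|)]
    exact d.adj⟩

/-- Auxiliary constructor for dominoes. -/
def mkDom (p q : Fin 3 → ℤ) (h : (∑ i, |p i - q i|) = 1) : Domino := ⟨p, q, h⟩

/-- The three dominoes removed by the canonical positive trit. -/
def tritPre : Fin 3 → Domino
  | 0 => mkDom ![0,0,0] ![0,0,1] (by decide)
  | 1 => mkDom ![0,1,1] ![1,1,1] (by decide)
  | 2 => mkDom ![1,0,0] ![1,1,0] (by decide)

/-- The three dominoes placed back by the canonical positive trit. -/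
def tritPost : Fin 3 → Domino
  | 0 => mkDom ![0,0,0] ![1,0,0] (by decide)
  | 1 => mkDom ![0,0,1] ![0,1,1] (by decide)
  | 2 => mkDom ![1,1,0] ![1,1,1] (by decide)

/-- `t1` is obtained from `t0` by a flip: two dominoes of `t0` occupying a
`2×2×1` slab are replaced by the two other dominoes filling the same slab. -/
def IsFlip (t0 t1 : Finset Domino) : Prop :=
  ∃ d0 d0' d1 d1' : Domino, d0 ∈ t0 ∧ d0' ∈ t0 ∧ d0 ≠ d0' ∧
    d1 ∈ t1 ∧ d1' ∈ t1 ∧ d1 ≠ d1' ∧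
    t0 \ {d0, d0'} = t1 \ {d1, d1'} ∧
    ({d0, d0'} : Finset Domino) ≠ {d1, d1'} ∧
    d0.cubes ∪ d0'.cubes = d1.cubes ∪ d1'.cubes

/-- `t1` is obtained from `t0` by a positive trit: up to an orientation preserving
lattice isometry, three dominoes of `t0` in the canonical pre-trit position are
replaced by the three dominoes in the canonical post-trit position. -/
def IsPositiveTrit (t0 t1 : Finset Domino) : Prop :=
  ∃ (σ : Equiv.Perm (Fin 3)) (ε : Fin 3 → ℤ) (b : Fin 3 → ℤ),
    (∀ i, ε i = 1 ∨ ε i = -1) ∧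
    ((∏ i, ε i) : ℤ) * (Equiv.Perm.sign σ : ℤ) = 1 ∧
    ∃ a : Fin 3 → Domino, ∃ a' : Fin 3 → Domino,
      (∀ j, a j ∈ t0) ∧ (∀ j, a' j ∈ t1) ∧
      (∀ j, (a j).same (((tritPre j).rot σ ε).translate b)) ∧
      (∀ j, (a' j).same (((tritPost j).rot σ ε).translate b)) ∧
      t0 \ {a 0, a 1, a 2} = t1 \ {a' 0, a' 1, a' 2}

/-- A cube `q` lies in the closed shade, in the direction `±e_k` (sign `sgn`),
of the 2×2 square with normal `e_k` and corner `p` (at height `p k`). -/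
def inShade (k : Fin 3) (sgn : Bool) (p q : Fin 3 → ℤ) : Prop :=
  (∀ j, j ≠ k → q j = p j ∨ q j = p j + 1) ∧ (if sgn then p k ≤ q k else q k < p k)

instance (k : Fin 3) (sgn : Bool) (p q : Fin 3 → ℤ) : Decidable (inShade k sgn p q) := by
  unfold inShade; infer_instance

/-- The 2×2 square with normal `e_k`, corner `p`, at height `p k`
is contained in the region `R`. -/
def squareInRegion (R : Finset (Fin 3 → ℤ)) (k : Fin 3) (p : Fin 3 → ℤ) : Prop :=
  ∀ q : Fin 3 → ℤ, (∀ j, j ≠ k → q j = p j ∨ q j = p j + 1) → q k = p k →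
    q ∈ R ∨ Function.update q k (p k - 1) ∈ R

/-- `R` is fully balanced with respect to the directions `±e_k`. -/
def FullyBalancedWrt (R : Finset (Fin 3 → ℤ)) (k : Fin 3) : Prop :=
  ∀ p : Fin 3 → ℤ, squareInRegion R k p →
    (∑ q ∈ R, if inShade k true p q then col q else 0) = 0 ∧
    (∑ q ∈ R, if inShade k false p q then col q else 0) = 0

/-- `R` is a pseudocylinder with axis `e_k` and depth `n`: a planar region with
connected interior, thickened `n` layers in the direction `e_k`. -/
def IsPseudocylinder (R : Finset (Fin 3 → ℤ)) (k : Fin 3) (n : ℕ) : Prop :=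
  0 < n ∧
  (∀ q ∈ R, 0 ≤ q k ∧ q k < n) ∧
  (∀ q ∈ R, ∀ m : ℤ, 0 ≤ m → m < n → Function.update q k m ∈ R) ∧
  R.Nonempty ∧
  IsConnected (interior (regionSet (R.filter (fun q => q k = 0))))

/-- A cylinder: a pseudocylinder whose base is simply connected. -/
def IsCylinder (R : Finset (Fin 3 → ℤ)) (k : Fin 3) (n : ℕ) : Prop :=
  IsPseudocylinder R k n ∧
  SimplyConnectedSpace (interior (regionSet (R.filter (fun q => q k = 0))))

/-- A (lattice) segment: the unit straight path between the centers of two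
face-adjacent basic cubes, from the center of the cube `a` to that of `b`. -/
structure Seg where
  a : Fin 3 → ℤ
  b : Fin 3 → ℤ
  adj : (∑ i, |a i - b i|) = 1

/-- The point of a segment at parameter `x ∈ [0,1]`. -/
def Seg.pt (s : Seg) (x : ℝ) : R3 := fun i => (cubeCenter s.a i) + x * ((s.b i : ℝ) - s.a i)

/-- The direction `v(ℓ) = ℓ(1) - ℓ(0)` of a segment. -/
def Seg.vec (s : Seg) : R3 := fun i => (s.b i : ℝ) - s.a i

/-- A segment lies in a region if both its cubes do. -/
def Seg.inRegion (s : Seg) (R : Finset (Fin 3 → ℤ)) : Prop := s.a ∈ R ∧ s.b ∈ R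

/-- A straight segment in `ℝ³`, with base point `p` and direction `v`. -/
structure RSeg where
  p : R3
  v : R3

/-- The point of an `RSeg` at parameter `x ∈ [0,1]`. -/
def RSeg.pt (l : RSeg) (x : ℝ) : R3 := fun i => l.p i + x * l.v i

/-- Orientation reversal of an `RSeg`. -/
def RSeg.reverse (l : RSeg) : RSeg := ⟨fun i => l.p i + l.v i, fun i => -l.v i⟩

/-- Translation of an `RSeg`. -/
def RSeg.translate (l : RSeg) (u : R3) : RSeg := ⟨fun i => l.p i + u i, l.v⟩

/-- The `RSeg` underlying a lattice segment. -/
def Seg.toR (s : Seg) : RSeg := ⟨cubeCenter s.a, s.vec⟩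

/-- The dimer of a domino: the segment from the white center to the black center. -/
def Domino.dimer (d : Domino) : RSeg :=
  if cubeBlack d.c1 then ⟨cubeCenter d.c2, d.v⟩ else ⟨cubeCenter d.c1, d.v⟩

/-- The orthogonal projection onto the plane `u^⊥`. -/
def projO (u : R3) (x : R3) : R3 := fun i => x i - (dot x u) * u i

/-- The (slanted) projection onto `b3^⊥` with kernel spanned by `b3 + a·b1 + b·b2`. -/
def projSl (b1 b2 b3 : R3) (a b : ℝ) (x : R3) : R3 :=
  fun i => x i - (dot x b3) * (b3 i + a * b1 i + b * b2 i)

/-- The effect of segment `l0` on segment `l1` along `u` (orthogonal version). -/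
def tauR (u : R3) (l0 l1 : RSeg) : ℝ :=
  open scoped Classical in
  if ((∃ x0 ∈ Set.Icc (0:ℝ) 1, ∃ x1 ∈ Set.Icc (0:ℝ) 1,
        projO u (l0.pt x0) = projO u (l1.pt x1)) ∧ dot (l0.pt 0) u < dot (l1.pt 0) u)
  then (1/4) * det3 l1.v l0.v u else 0

/-- The slanted effect `τ^β_{a,b}(l0,l1)`. -/
def tauSl (b1 b2 b3 : R3) (a b : ℝ) (l0 l1 : RSeg) : ℝ :=
  open scoped Classical in
  if ((∃ x0 ∈ Set.Icc (0:ℝ) 1, ∃ x1 ∈ Set.Icc (0:ℝ) 1,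
        projSl b1 b2 b3 a b (l0.pt x0) = projSl b1 b2 b3 a b (l1.pt x1))
      ∧ dot (l0.pt 0) b3 < dot (l1.pt 0) b3)
  then det3 l1.v l0.v b3 else 0

/-- `T^u(A,B)` summed over two finite families of segments. -/
def Tfam {n m : ℕ} (u : R3) (A : Fin n → RSeg) (B : Fin m → RSeg) : ℝ :=
  ∑ k, ∑ l, tauR u (A k) (B l)

/-- The combinatorial linking number (along `u`) of two disjoint closed curves:
half the symmetrized sum of effects. -/
def LinkAlong {n m : ℕ} (u : R3) (A : Fin n → RSeg) (B : Fin m → RSeg) : ℝ :=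
  (Tfam u A B + Tfam u B A) / 2

/-- The `u`-pretwist of a tiling, computed via dimers. -/
def Tdim (u : R3) (t : Finset Domino) : ℝ := ∑ d0 ∈ t, ∑ d1 ∈ t, tauR u d0.dimer d1.dimer

/-- A closed curve given by a cyclic list of segments. -/
def IsClosedCurve {n : ℕ} (γ : Fin n → RSeg) : Prop :=
  2 ≤ n ∧ ∀ k : Fin n,
    (γ k).pt 1 = (γ ⟨(k.val + 1) % n, Nat.mod_lt _ k.pos⟩).pt 0

/-- A closed curve is simple when its vertices are pairwise distinct. -/
def IsSimpleCurve {n : ℕ} (γ : Fin n → RSeg) : Prop :=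
  Function.Injective (fun k : Fin n => (γ k).pt 0)

/-- The (cyclically) next segment of a curve. -/
def nextSeg {n : ℕ} (hn : 0 < n) (γ : Fin n → RSeg) (k : Fin n) : RSeg :=
  γ ⟨(k.val + 1) % n, Nat.mod_lt _ hn⟩

/-- Adjacency of basic cubes. -/
def cubeAdj (p q : Fin 3 → ℤ) : Prop := (∑ i, |p i - q i|) = 1

/-- The associated graph of a region: vertices are cubes, edges join
face-adjacent cubes. -/
def cubeGraph (R : Finset (Fin 3 → ℤ)) : SimpleGraph {q // q ∈ R} where
  Adj p q := cubeAdj p.val q.val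
  symm := by
    constructor
    intro p q h
    unfold cubeAdj at h ⊢
    rw [Finset.sum_congr rfl fun i _ => abs_sub_comm (q.val i) (p.val i)]
    exact h
  loopless := by constructor; intro p h; simp [cubeAdj] at h

/-- The prism `G × I_m` over a graph `G`: the product of `G` with a path. -/
def prism {V : Type*} (G : SimpleGraph V) (m : ℕ) : SimpleGraph (V × Fin m) where
  Adj a b := (a.1 = b.1 ∧ (a.2.val + 1 = b.2.val ∨ b.2.val + 1 = a.2.val))
    ∨ (G.Adj a.1 b.1 ∧ a.2 = b.2)
  symm := by
    constructor
    intro a b h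
    rcases h with ⟨h1, h2⟩ | ⟨h1, h2⟩
    · exact Or.inl ⟨h1.symm, h2.symm⟩
    · exact Or.inr ⟨h1.symm, h2.symm⟩
  loopless := by
    constructor
    intro a h
    rcases h with ⟨-, h2⟩ | ⟨h1, -⟩
    · omega
    · exact G.irrefl h1

/-- The turning indicator `η` of a curve at position `k`. -/
def eta {n : ℕ} (b2 b3 : R3) (γ : Fin n → RSeg) (k : Fin n) : ℝ :=
  open scoped Classical in
  if ((γ k).v = b2 ∧ (nextSeg k.pos γ k).v = b3)
      ∨ ((γ k).v = -b3 ∧ (nextSeg k.pos γ k).v = -b2) then 1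
  else if ((γ k).v = -b2 ∧ (nextSeg k.pos γ k).v = -b3)
      ∨ ((γ k).v = b3 ∧ (nextSeg k.pos γ k).v = b2) then -1
  else 0

/-- A box: a rectangular parallelepiped of basic cubes. -/
def IsBox (B : Finset (Fin 3 → ℤ)) : Prop :=
  ∃ lo hi : Fin 3 → ℤ, (∀ i, lo i < hi i) ∧ ∀ q, q ∈ B ↔ ∀ i, lo i ≤ q i ∧ q i < hi i
/-!
Every domino is an axis-parallel box, and the open shade of a box `B` along `e_k` is the open
half-infinite prism over the interior of the face of `B` facing `e_k`. So a box `C` meets it iff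
the projections of `B` and `C` along `e_k` overlap in interior points and `C` reaches beyond the
top of `B`; in the opposite direction one asks instead that `B` reaches below the bottom of `C`.
When `u = ±e_k` is orthogonal to both dominoes both boxes have height `1` along `u`, and the two
conditions agree; when one domino is parallel to `u` the determinant vanishes.
-/

open Set

theorem shade_neg (u : R3) (X : Set R3) : shade (-u) (-X) = -shade u X := by
  have hsweep : {y | ∃ x ∈ -X, ∃ s : ℝ, 0 ≤ s ∧ y = x + s • -u}
      = -{y | ∃ x ∈ X, ∃ s : ℝ, 0 ≤ s ∧ y = x + s • u} := by
    ext y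
    constructor
    · rintro ⟨x, hx, s, hs, rfl⟩
      exact ⟨-x, hx, s, hs, by rw [smul_neg, neg_add, neg_neg]⟩
    · rintro ⟨x, hx, s, hs, hy⟩
      exact ⟨-x, by rwa [mem_neg, neg_neg], s, hs, by rw [← neg_neg y, hy, neg_add, smul_neg]⟩
  rw [shade, shade, hsweep, ← neg_preimage, ← neg_preimage, ← preimage_sdiff]
  exact ((Homeomorph.neg R3).preimage_interior _).symm

theorem sweep_stdR_Icc_diff {a b : R3} (hab : a ≤ b) (k : Fin 3) :
    {y | ∃ x ∈ Icc a b, ∃ s : ℝ, 0 ≤ s ∧ y = x + s • stdR k} \ Icc a b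
      = univ.pi fun m => if m = k then Ioi (b k) else Icc (a m) (b m) := by
  ext y
  simp only [mem_sdiff, mem_ofPred_eq, mem_univ_pi, ← pi_univ_Icc]
  constructor
  · rintro ⟨⟨x, hx, s, hs, rfl⟩, hy⟩ m
    have hcoord : ∀ i, (x + s • stdR k) i = if i = k then x k + s else x i := by
      intro i; by_cases hi : i = k <;> simp [stdR, hi]
    by_cases hm : m = k
    · subst hm
      rw [if_pos rfl, hcoord, if_pos rfl, mem_Ioi]
      by_contra hle
      refine hy fun i => ?_
      by_cases hi : i = m
      · subst hi
        rw [hcoord, if_pos rfl]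
        exact ⟨(hx i).1.trans (le_add_of_nonneg_right hs), not_lt.1 hle⟩
      · rw [hcoord, if_neg hi]; exact hx i
    · rw [if_neg hm, hcoord, if_neg hm]; exact hx m
  · intro hy
    have hyk : b k < y k := by simpa using hy k
    refine ⟨⟨Function.update y k (b k), fun m => ?_, y k - b k, by linarith, ?_⟩, fun h => ?_⟩
    · by_cases hm : m = k
      · subst hm; simpa using hab m
      · simpa [hm] using hy m
    · ext m; by_cases hm : m = k <;> simp [stdR, hm]
    · exact absurd (h k).2 (not_le.2 hyk)

theorem shade_stdR_Icc {a b : R3} (hab : a ≤ b) (k : Fin 3) :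
    shade (stdR k) (Icc a b)
      = univ.pi fun m => if m = k then Ioi (b k) else Ioo (a m) (b m) := by
  rw [shade, sweep_stdR_Icc_diff hab, interior_pi_set finite_univ]
  congr 1
  ext1 m
  split_ifs
  · exact interior_Ioi
  · exact interior_Icc

theorem Icc_inter_Ioi_nonempty_iff {α : Type*} [Preorder α] {c d b : α} (hcd : c ≤ d) :
    (Icc c d ∩ Ioi b).Nonempty ↔ b < d :=
  ⟨fun ⟨_, hx, hbx⟩ => lt_of_lt_of_le hbx hx.2, fun h => ⟨d, right_mem_Icc.2 hcd, h⟩⟩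

theorem Icc_inter_Ioo_nonempty_iff {𝕜 : Type*} [Field 𝕜] [LinearOrder 𝕜] [IsStrictOrderedRing 𝕜]
    {c d a b : 𝕜} (hcd : c ≤ d) (hab : a < b) :
    (Icc c d ∩ Ioo a b).Nonempty ↔ c < b ∧ a < d := by
  constructor
  · rintro ⟨x, hx, hax, hxb⟩
    exact ⟨hx.1.trans_lt hxb, hax.trans_le hx.2⟩
  · rintro ⟨hcb, had⟩
    refine ⟨(max a c + min b d) / 2, ⟨?_, ?_⟩, ?_, ?_⟩ <;>
      linarith [le_max_left a c, le_max_right a c, min_le_left b d, min_le_right b d,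
        max_lt hab hcb, lt_min hab had, le_min hcb.le hcd, max_le had.le hcd]

theorem Icc_inter_shade_stdR_nonempty_iff {a b c d : R3} (hab : ∀ m, a m < b m) (hcd : c ≤ d)
    (k : Fin 3) :
    (Icc c d ∩ shade (stdR k) (Icc a b)).Nonempty ↔
      (∀ m ≠ k, c m < b m ∧ a m < d m) ∧ b k < d k := by
  rw [shade_stdR_Icc (fun m => (hab m).le), ← pi_univ_Icc, ← pi_inter_distrib,
    univ_pi_nonempty_iff]
  constructor
  · intro h
    refine ⟨fun m hm => ?_, ?_⟩
    · simpa [hm, Icc_inter_Ioo_nonempty_iff (hcd m) (hab m)] using h m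
    · simpa [Icc_inter_Ioi_nonempty_iff (hcd k)] using h k
  · rintro ⟨hne, hk⟩ m
    by_cases hm : m = k
    · subst hm; simpa [Icc_inter_Ioi_nonempty_iff (hcd m)] using hk
    · simpa [hm, Icc_inter_Ioo_nonempty_iff (hcd m) (hab m)] using hne m hm

theorem Icc_inter_shade_neg_stdR_nonempty_iff {a b c d : R3} (hab : ∀ m, a m < b m)
    (hcd : c ≤ d) (k : Fin 3) :
    (Icc c d ∩ shade (-stdR k) (Icc a b)).Nonempty ↔
      (∀ m ≠ k, c m < b m ∧ a m < d m) ∧ c k < a k := by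
  have hneg : ∀ x y : R3, Icc x y = -Icc (-y) (-x) := fun x y => by
    rw [neg_Icc, neg_neg, neg_neg]
  rw [hneg a, hneg c, shade_neg, ← inter_neg, nonempty_neg,
    Icc_inter_shade_stdR_nonempty_iff (by simpa using hab) (neg_le_neg hcd)]
  simp only [Pi.neg_apply, neg_lt_neg_iff, and_comm]

theorem Icc_inter_shade_stdR_nonempty_iff_comm {a b c d : R3} (hab : ∀ m, a m < b m)
    (hcd : ∀ m, c m < d m) (k : Fin 3) (hk : b k - a k = d k - c k) :
    (Icc c d ∩ shade (stdR k) (Icc a b)).Nonempty ↔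
      (Icc a b ∩ shade (-stdR k) (Icc c d)).Nonempty := by
  rw [Icc_inter_shade_stdR_nonempty_iff hab (fun m => (hcd m).le),
    Icc_inter_shade_neg_stdR_nonempty_iff hcd (fun m => (hab m).le)]
  refine and_congr (forall₂_congr fun m _ => and_comm) ?_
  constructor <;> intro h <;> linarith

theorem exists_eq_single_of_sum_abs_eq_one {w : Fin 3 → ℤ} (hw : ∑ i, |w i| = 1) :
    ∃ i, w = Pi.single i 1 ∨ w = -Pi.single i 1 := by
  simp only [Fin.sum_univ_three, abs_eq_max_neg] at hw
  have : ((w 0 = 1 ∨ w 0 = -1) ∧ w 1 = 0 ∧ w 2 = 0) ∨ ((w 1 = 1 ∨ w 1 = -1) ∧ w 0 = 0 ∧ w 2 = 0)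
      ∨ ((w 2 = 1 ∨ w 2 = -1) ∧ w 0 = 0 ∧ w 1 = 0) := by omega
  rcases this with ⟨h, ha, hb⟩ | ⟨h, ha, hb⟩ | ⟨h, ha, hb⟩
  · refine ⟨0, h.imp (fun h => ?_) (fun h => ?_)⟩ <;> funext m <;> fin_cases m <;> simp [*]
  · refine ⟨1, h.imp (fun h => ?_) (fun h => ?_)⟩ <;> funext m <;> fin_cases m <;> simp [*]
  · refine ⟨2, h.imp (fun h => ?_) (fun h => ?_)⟩ <;> funext m <;> fin_cases m <;> simp [*]

theorem cubeSet_union_cubeSet_add_single (q : Fin 3 → ℤ) (i : Fin 3) :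
    cubeSet q ∪ cubeSet (q + Pi.single i 1)
      = Icc (fun m => (q m : ℝ)) ((fun m => (q m : ℝ)) + 1 + stdR i) := by
  ext x
  simp only [cubeSet, mem_union, mem_ofPred_eq, mem_Icc, Pi.le_def, ← forall_and, Pi.add_apply,
    Pi.one_apply]
  have hcoord : ∀ m, ((q m + (Pi.single i 1 : Fin 3 → ℤ) m : ℤ) : ℝ) = q m + stdR i m := by
    intro m; by_cases hm : m = i <;> simp [stdR, hm]
  simp only [hcoord]
  constructor
  · rintro (h | h) m <;> obtain ⟨h1, h2⟩ := h m <;>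
      by_cases hm : m = i <;> simp only [stdR, hm, if_true, if_false] at h1 h2 ⊢ <;>
      constructor <;> linarith
  · intro h
    by_cases hx : x i ≤ q i + 1
    · left; intro m; obtain ⟨h1, h2⟩ := h m
      by_cases hm : m = i
      · subst hm; exact ⟨h1, hx⟩
      · simp only [stdR, hm, if_false, add_zero] at h2; exact ⟨h1, h2⟩
    · right; intro m; obtain ⟨h1, h2⟩ := h m
      by_cases hm : m = i
      · subst hm; simp only [stdR, if_true] at h2 ⊢; constructor <;> linarith
      · simp only [stdR, hm, if_false, add_zero] at h2 ⊢; exact ⟨h1, h2⟩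

theorem Domino.v_eq_or_eq_neg (d : Domino) :
    d.v = (fun m => (d.c2 m : ℝ) - d.c1 m) ∨ d.v = -fun m => (d.c2 m : ℝ) - d.c1 m := by
  unfold Domino.v
  split_ifs
  · exact .inr (funext fun m => by simp)
  · exact .inl rfl

theorem Domino.exists_toSet_eq_Icc (d : Domino) :
    ∃ (i : Fin 3) (p : R3), d.toSet = Icc p (p + 1 + stdR i) ∧ (d.v = stdR i ∨ d.v = -stdR i) := by
  have hw : ∑ m, |(d.c2 - d.c1) m| = 1 := by simpa [abs_sub_comm] using d.adj
  obtain ⟨i, hi | hi⟩ := exists_eq_single_of_sum_abs_eq_one hw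
  · have hdiff : (fun m => (d.c2 m : ℝ) - d.c1 m) = stdR i := by
      funext m; rw [← Int.cast_sub, ← Pi.sub_apply, hi]; by_cases hm : m = i <;> simp [stdR, hm]
    refine ⟨i, fun m => d.c1 m, ?_, hdiff ▸ d.v_eq_or_eq_neg⟩
    rw [Domino.toSet, ← cubeSet_union_cubeSet_add_single, eq_add_of_sub_eq' hi]
  · have hdiff : (fun m => (d.c2 m : ℝ) - d.c1 m) = -stdR i := by
      funext m; rw [← Int.cast_sub, ← Pi.sub_apply, hi]; by_cases hm : m = i <;> simp [stdR, hm]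
    refine ⟨i, fun m => d.c2 m, ?_, ?_⟩
    · rw [Domino.toSet, union_comm, ← cubeSet_union_cubeSet_add_single,
        eq_add_of_sub_eq' (by rw [← neg_sub, hi, neg_neg] : d.c1 - d.c2 = Pi.single i 1)]
    · simpa only [hdiff, neg_neg, or_comm] using d.v_eq_or_eq_neg

theorem det3_neg_swap (a b c : R3) : det3 b a (-c) = det3 a b c := by
  simp only [det3, Matrix.det_fin_three, Matrix.of_apply, Matrix.cons_val, Pi.neg_apply]; ring

theorem det3_eq_zero_of_eq_or_eq_neg₂₃ (a : R3) {b c : R3} (h : b = c ∨ b = -c) :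
    det3 a b c = 0 := by
  rcases h with rfl | rfl <;>
    simp only [det3, Matrix.det_fin_three, Matrix.of_apply, Matrix.cons_val, Pi.neg_apply] <;> ring

theorem det3_eq_zero_of_eq_or_eq_neg₁₃ (b : R3) {a c : R3} (h : a = c ∨ a = -c) :
    det3 a b c = 0 := by
  rcases h with rfl | rfl <;>
    simp only [det3, Matrix.det_fin_three, Matrix.of_apply, Matrix.cons_val, Pi.neg_apply] <;> ring

theorem lt_add_one_add_stdR (p : R3) (i m : Fin 3) : p m < (p + 1 + stdR i) m := by
  simp only [Pi.add_apply, Pi.one_apply, stdR]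
  split_ifs <;> linarith

theorem add_one_add_stdR_apply_of_ne (p : R3) {i k : Fin 3} (h : i ≠ k) :
    (p + 1 + stdR i) k = p k + 1 := by
  simp [stdR, Ne.symm h]

theorem tau_stdR_eq_tau_neg_stdR (k : Fin 3) (d0 d1 : Domino) :
    tau (stdR k) d0 d1 = tau (-stdR k) d1 d0 := by
  obtain ⟨i, p, hp, hv0⟩ := d0.exists_toSet_eq_Icc
  obtain ⟨j, q, hq, hv1⟩ := d1.exists_toSet_eq_Icc
  rw [tau, tau, det3_neg_swap]
  by_cases hik : i = k
  · subst hik; simp [det3_eq_zero_of_eq_or_eq_neg₂₃ _ hv0]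
  by_cases hjk : j = k
  · subst hjk; simp [det3_eq_zero_of_eq_or_eq_neg₁₃ _ hv1]
  have hwidth : (p + 1 + stdR i) k - p k = (q + 1 + stdR j) k - q k := by
    rw [add_one_add_stdR_apply_of_ne p hik, add_one_add_stdR_apply_of_ne q hjk]
    ring
  rw [hp, hq, Icc_inter_shade_stdR_nonempty_iff_comm (lt_add_one_add_stdR p i)
    (lt_add_one_add_stdR q j) k hwidth]

theorem statement0 (d0 d1 : Domino) (u : R3) (hu : u ∈ PhiR) :
    tau u d0 d1 = tau (-u) d1 d0 := by
  obtain ⟨k, rfl | rfl⟩ := hu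
  · exact tau_stdR_eq_tau_neg_stdR k d0 d1
  · rw [neg_neg]
    exact (tau_stdR_eq_tau_neg_stdR k d1 d0).symm
end
end

section
/- Let w ∈ {e1,e2,e3} and let r: R^3 → R^3 be the reflection p ↦ p − 2(p·w)w. If t is a tiling of a region R and u ∈ Φ, then the reflected tiling r(t) of r(R) satisfies T^u(r(t)) = −T^u(t). -/
open scoped BigOperators
noncomputable section

/-!
The reflection `r` in the plane `x_k = 0` maps the `r(u)`-shade of a domino onto the
`u`-shade of its image and turns `v(d)` into `-r(v(d))`; since `r` reverses orientation,
`τ^u(r d₀, r d₁) = -τ^{r u}(d₀, d₁)` and so `T^u(r t) = -T^{r u}(t)`. For `u ∈ Φ` we have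
`r u = ±u`, and `T^{-u} = T^u` because `τ^{-u}(d₀, d₁) = τ^u(d₁, d₀)`: the effect vanishes
unless both dominoes are flat in the direction `u`, and since dominoes are boxes, whose
shades along `±u` are explicit open boxes, two flat dominoes of unit thickness lie in each
other's opposite shades.
-/

open Set

lemma univ_pi_union_univ_pi {ι α : Type*} {f g : ι → Set α} (j : ι) (h : ∀ i ≠ j, f i = g i) :
    univ.pi f ∪ univ.pi g = univ.pi fun i => f i ∪ g i := by
  refine Subset.antisymm (union_subset (pi_mono fun i _ => subset_union_left)
    (pi_mono fun i _ => subset_union_right)) fun x hx => ?_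
  rw [mem_univ_pi] at hx
  have hoff (i) (hi : i ≠ j) : x i ∈ f i ∧ x i ∈ g i := by
    simpa [h i hi] using hx i
  rcases hx j with hj | hj
  · refine Or.inl <| mem_univ_pi.2 fun i => ?_
    rcases eq_or_ne i j with rfl | hi
    exacts [hj, (hoff i hi).1]
  · refine Or.inr <| mem_univ_pi.2 fun i => ?_
    rcases eq_or_ne i j with rfl | hi
    exacts [hj, (hoff i hi).2]

lemma Ioo_inter_Iio_nonempty_iff (a b : ℝ) :
    (Ioo a (a + 1) ∩ Iio b).Nonempty ↔ (Ioo b (b + 1) ∩ Ioi (a + 1)).Nonempty := by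
  simp [Ioo_inter_Iio, Ioo_inter_Ioi]

lemma det3_swap (a b c : R3) : det3 a b c = -det3 b a c := by
  simp [det3, Matrix.det_fin_three]; ring

lemma det3_neg_neg (a b c : R3) : det3 (-a) (-b) c = det3 a b c := by
  simp [det3, Matrix.det_fin_three]

lemma det3_stdR_eq_zero {a b : R3} {m : Fin 3} (hb : ∀ i ≠ m, b i = 0) :
    det3 a b (stdR m) = 0 := by
  fin_cases m <;> simp [det3, Matrix.det_fin_three, stdR, hb]

lemma shade_preimage (e : R3 ≃L[ℝ] R3) (u : R3) (X : Set R3) :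
    shade u (e ⁻¹' X) = e ⁻¹' shade (e u) X := by
  have hray : {y | ∃ x ∈ e ⁻¹' X, ∃ s : ℝ, 0 ≤ s ∧ y = x + s • u}
      = e ⁻¹' {y | ∃ x ∈ X, ∃ s : ℝ, 0 ≤ s ∧ y = x + s • e u} := by
    ext y
    simp only [mem_ofPred_eq, mem_preimage]
    constructor
    · rintro ⟨x, hx, s, hs, rfl⟩
      exact ⟨e x, hx, s, hs, by simp⟩
    · rintro ⟨x, hx, s, hs, hy⟩
      refine ⟨e.symm x, by simpa using hx, s, hs, e.injective ?_⟩
      simp [hy]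
  rw [shade, shade, hray, ← preimage_sdiff]
  exact (e.toHomeomorph.preimage_interior _).symm

/-- The reflection `p ↦ p - 2 (p · e_k) e_k`; on cube centers it acts as `reflCube k`. -/
def reflR (k : Fin 3) : R3 ≃L[ℝ] R3 :=
  LinearEquiv.toContinuousLinearEquiv <| LinearEquiv.ofInvolutive
    (LinearMap.pi fun i => if i = k then -LinearMap.proj i else LinearMap.proj i)
    (fun x => by funext i; by_cases h : i = k <;> simp [h])

@[simp] lemma reflR_apply (k : Fin 3) (x : R3) (i : Fin 3) :
    reflR k x i = if i = k then -x i else x i := by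
  show (if i = k then -LinearMap.proj i else LinearMap.proj i : R3 →ₗ[ℝ] ℝ) x = _
  split_ifs <;> rfl

lemma reflR_stdR_self (k : Fin 3) : reflR k (stdR k) = -stdR k := by
  ext i; by_cases h : i = k <;> simp [stdR, h]

lemma reflR_stdR_of_ne {i k : Fin 3} (h : i ≠ k) : reflR k (stdR i) = stdR i := by
  ext j; rcases eq_or_ne j k with rfl | hj <;> simp [stdR, *, Ne.symm h]

lemma reflR_of_mem_PhiR (k : Fin 3) {u : R3} (hu : u ∈ PhiR) :
    reflR k u = u ∨ reflR k u = -u := by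
  obtain ⟨m, rfl | rfl⟩ := hu <;> rcases eq_or_ne m k with rfl | hm <;>
    simp [reflR_stdR_self, reflR_stdR_of_ne, *]

lemma reflR_preimage_univ_pi (k : Fin 3) (S : Fin 3 → Set ℝ) :
    reflR k ⁻¹' univ.pi S = univ.pi fun i => if i = k then -S i else S i := by
  ext x
  simp only [mem_preimage, mem_univ_pi, reflR_apply]
  refine forall_congr' fun i => ?_
  split_ifs <;> simp

lemma det3_reflR (k : Fin 3) (a b c : R3) :
    det3 (reflR k a) (reflR k b) c = -det3 a b (reflR k c) := by
  fin_cases k <;> simp [det3, Matrix.det_fin_three] <;> ring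

lemma cubeSet_reflCube (k : Fin 3) (q : Fin 3 → ℤ) :
    cubeSet (reflCube k q) = reflR k ⁻¹' cubeSet q := by
  ext x
  simp only [cubeSet, reflCube, mem_ofPred_eq, mem_preimage, reflR_apply]
  refine forall_congr' fun i => ?_
  split_ifs
  · push_cast; constructor <;> intro h <;> constructor <;> linarith [h.1, h.2]
  · rfl

lemma cubeBlack_reflCube (k : Fin 3) (q : Fin 3 → ℤ) :
    cubeBlack (reflCube k q) ↔ ¬ cubeBlack q := by
  fin_cases k <;> simp [cubeBlack, reflCube, Int.odd_iff] <;> omega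

lemma Domino.toSet_reflect (d : Domino) (k : Fin 3) :
    (d.reflect k).toSet = reflR k ⁻¹' d.toSet := by
  simp only [Domino.toSet, Domino.reflect, cubeSet_reflCube, preimage_union]

lemma Domino.v_reflect (d : Domino) (k : Fin 3) : (d.reflect k).v = -reflR k d.v := by
  ext i
  by_cases h : cubeBlack d.c1 <;> by_cases hi : i = k <;>
    simp [Domino.v, Domino.reflect, cubeBlack_reflCube, reflCube, h, hi] <;> ring

lemma Domino.reflect_reflect (d : Domino) (k : Fin 3) : (d.reflect k).reflect k = d := by
  have h (q : Fin 3 → ℤ) : reflCube k (reflCube k q) = q := by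
    ext i; by_cases h : i = k <;> simp [reflCube, h]
  cases d; simp [Domino.reflect, h]

lemma tau_reflect (k : Fin 3) (u : R3) (d0 d1 : Domino) :
    tau u (d0.reflect k) (d1.reflect k) = -tau (reflR k u) d0 d1 := by
  have hdet : det3 (d1.reflect k).v (d0.reflect k).v u = -det3 d1.v d0.v (reflR k u) := by
    rw [Domino.v_reflect, Domino.v_reflect, det3_neg_neg, det3_reflR]
  have hmeet : ((d1.reflect k).toSet ∩ shade u (d0.reflect k).toSet).Nonempty
      ↔ (d1.toSet ∩ shade (reflR k u) d0.toSet).Nonempty := by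
    rw [Domino.toSet_reflect, Domino.toSet_reflect, shade_preimage, ← preimage_inter]
    exact (reflR k).surjective.nonempty_preimage
  unfold tau
  split_ifs <;> simp_all

lemma T_image_reflect (k : Fin 3) (u : R3) (t : Finset Domino) :
    T u (t.image fun d => d.reflect k) = -T (reflR k u) t := by
  have hinj : Function.Injective fun d : Domino => d.reflect k := fun d e h => by
    simpa [Domino.reflect_reflect] using congrArg (fun d : Domino => d.reflect k) h
  simp only [T, Finset.sum_image fun _ _ _ _ h => hinj h, tau_reflect, Finset.sum_neg_distrib]

lemma shade_stdR_pi_Icc {lo hi : R3} (h : lo ≤ hi) (m : Fin 3) :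
    shade (stdR m) (univ.pi fun i => Icc (lo i) (hi i))
      = univ.pi fun i => if i = m then Ioi (hi m) else Ioo (lo i) (hi i) := by
  have hdiff : {y | ∃ x ∈ univ.pi fun i => Icc (lo i) (hi i), ∃ s : ℝ, 0 ≤ s ∧ y = x + s • stdR m}
      \ (univ.pi fun i => Icc (lo i) (hi i))
      = univ.pi fun i => if i = m then Ioi (hi m) else Icc (lo i) (hi i) := by
    ext y
    simp only [mem_sdiff, mem_ofPred_eq, mem_univ_pi, mem_Icc]
    constructor
    · rintro ⟨⟨x, hx, s, hs, rfl⟩, hy⟩ i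
      have hcoord (j : Fin 3) : (x + s • stdR m) j = if j = m then x j + s else x j := by
        simp only [Pi.add_apply, Pi.smul_apply, stdR, smul_eq_mul, mul_ite]; split_ifs <;> simp
      rcases eq_or_ne i m with rfl | him
      · rw [if_pos rfl, mem_Ioi]
        refine lt_of_not_ge fun hle => hy fun j => ?_
        rw [hcoord, if_pos rfl] at hle
        rw [hcoord]
        split_ifs with hj
        · subst hj
          exact ⟨by linarith [hx j], hle⟩
        · exact hx j
      · simpa [hcoord, him] using hx i
    · intro hy
      have hm : hi m < y m := by simpa using hy m
      refine ⟨⟨Function.update y m (hi m), fun i => ?_, y m - hi m, by linarith, ?_⟩,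
        fun h' => (h' m).2.not_gt hm⟩
      · rcases eq_or_ne i m with rfl | him
        · simpa using h i
        · simpa [him] using hy i
      · ext i
        rcases eq_or_ne i m with rfl | him <;> simp [stdR, *]
  rw [shade, hdiff, interior_pi_set finite_univ]
  refine pi_congr rfl fun i _ => ?_
  split_ifs <;> simp

lemma shade_neg_stdR_pi_Icc {lo hi : R3} (h : lo ≤ hi) (m : Fin 3) :
    shade (-stdR m) (univ.pi fun i => Icc (lo i) (hi i))
      = univ.pi fun i => if i = m then Iio (lo m) else Ioo (lo i) (hi i) := by
  set lo' := Function.update lo m (-hi m)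
  set hi' := Function.update hi m (-lo m)
  have hle : lo' ≤ hi' := fun i => by
    rcases eq_or_ne i m with rfl | hi <;> simp [lo', hi', *, h i]
  have hbox : (univ.pi fun i => Icc (lo i) (hi i))
      = reflR m ⁻¹' univ.pi fun i => Icc (lo' i) (hi' i) := by
    rw [reflR_preimage_univ_pi]
    refine pi_congr rfl fun i _ => ?_
    rcases eq_or_ne i m with rfl | hi <;> simp [lo', hi', *]
  rw [hbox, shade_preimage, map_neg, reflR_stdR_self, neg_neg, shade_stdR_pi_Icc hle,
    reflR_preimage_univ_pi]
  refine pi_congr rfl fun i _ => ?_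
  rcases eq_or_ne i m with rfl | hi <;> simp [lo', hi', *]

lemma univ_pi_Icc_inter_nonempty_iff {lo hi : R3} (h : ∀ i, lo i < hi i) (S : Fin 3 → Set ℝ)
    (hS : ∀ i, IsOpen (S i)) :
    ((univ.pi fun i => Icc (lo i) (hi i)) ∩ univ.pi S).Nonempty
      ↔ ∀ i, (Ioo (lo i) (hi i) ∩ S i).Nonempty := by
  have hclosure : (univ.pi fun i => Icc (lo i) (hi i))
      = closure (univ.pi fun i => Ioo (lo i) (hi i)) := by
    simp [closure_pi_set, closure_Ioo (h _).ne]
  rw [hclosure, closure_inter_open_nonempty_iff (isOpen_set_pi finite_univ fun i _ => hS i),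
    ← pi_inter_distrib, univ_pi_nonempty_iff]

lemma Domino.c1_eq_c2_of_c1_ne_c2 {d : Domino} {i m : Fin 3} (hm : d.c1 m ≠ d.c2 m)
    (hi : i ≠ m) : d.c1 i = d.c2 i := by
  have h := d.adj
  rw [Fin.sum_univ_three] at h
  fin_cases m <;> fin_cases i <;> simp at hi hm ⊢ <;> grind

lemma Domino.exists_axis (d : Domino) : ∃ j, ∀ i ≠ j, d.c1 i = d.c2 i := by
  by_contra! h
  obtain ⟨i, -, hi⟩ := h 0
  obtain ⟨j, hji, hj⟩ := h i
  exact hj (Domino.c1_eq_c2_of_c1_ne_c2 hi hji)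

lemma Domino.v_apply_eq_zero_iff (d : Domino) (i : Fin 3) : d.v i = 0 ↔ d.c1 i = d.c2 i := by
  unfold Domino.v
  split_ifs
  · simp only [sub_eq_zero, Int.cast_inj]
  · simp only [sub_eq_zero, Int.cast_inj]; exact eq_comm

lemma Domino.c1_eq_c2_of_det3_ne_zero {a : R3} {d : Domino} {m : Fin 3}
    (h : det3 a d.v (stdR m) ≠ 0) : d.c1 m = d.c2 m :=
  by_contra fun hm => h <| det3_stdR_eq_zero fun _ hi =>
    (d.v_apply_eq_zero_iff _).2 (Domino.c1_eq_c2_of_c1_ne_c2 hm hi)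

def Domino.lo (d : Domino) : R3 := fun i => min (d.c1 i : ℝ) (d.c2 i)

def Domino.hi (d : Domino) : R3 := fun i => max (d.c1 i : ℝ) (d.c2 i) + 1

lemma Domino.lo_lt_hi (d : Domino) (i : Fin 3) : d.lo i < d.hi i := by
  have := min_le_max (a := (d.c1 i : ℝ)) (b := d.c2 i)
  simp only [Domino.lo, Domino.hi]; linarith

lemma Domino.hi_eq_lo_add_one {d : Domino} {m : Fin 3} (h : d.c1 m = d.c2 m) :
    d.hi m = d.lo m + 1 := by
  simp [Domino.lo, Domino.hi, h]

lemma Domino.toSet_eq_pi (d : Domino) : d.toSet = univ.pi fun i => Icc (d.lo i) (d.hi i) := by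
  have hcube (q : Fin 3 → ℤ) : cubeSet q = univ.pi fun i => Icc (q i : ℝ) (q i + 1) := by
    ext x; simp only [cubeSet, mem_univ_pi, mem_Icc, mem_ofPred_eq]
  obtain ⟨j, hj⟩ := d.exists_axis
  rw [Domino.toSet, hcube, hcube, univ_pi_union_univ_pi j fun i hi => by rw [hj i hi]]
  refine pi_congr rfl fun i _ => ?_
  have hle : |(d.c1 i : ℝ) - d.c2 i| ≤ 1 := by
    have := Finset.single_le_sum (fun i _ => abs_nonneg (d.c1 i - d.c2 i)) (Finset.mem_univ i)
    rw [d.adj] at this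
    exact_mod_cast this
  rw [abs_le] at hle
  rw [Icc_union_Icc' (by linarith) (by linarith), max_add_add_right]
  rfl

lemma tau_neg_stdR (m : Fin 3) (d0 d1 : Domino) : tau (-stdR m) d0 d1 = tau (stdR m) d1 d0 := by
  have hdet : det3 d1.v d0.v (-stdR m) = det3 d0.v d1.v (stdR m) := by
    simp [det3, Matrix.det_fin_three]; ring
  unfold tau
  rw [hdet]
  by_cases hz : det3 d0.v d1.v (stdR m) = 0
  · simp [hz]
  have h1 := Domino.c1_eq_c2_of_det3_ne_zero hz
  have h0 := Domino.c1_eq_c2_of_det3_ne_zero (a := d1.v) (by rwa [det3_swap, neg_ne_zero])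
  have hmeet : (d1.toSet ∩ shade (-stdR m) d0.toSet).Nonempty
      ↔ (d0.toSet ∩ shade (stdR m) d1.toSet).Nonempty := by
    rw [d0.toSet_eq_pi, d1.toSet_eq_pi, shade_neg_stdR_pi_Icc (fun i => (d0.lo_lt_hi i).le),
      shade_stdR_pi_Icc (fun i => (d1.lo_lt_hi i).le),
      univ_pi_Icc_inter_nonempty_iff d1.lo_lt_hi _ ?open0,
      univ_pi_Icc_inter_nonempty_iff d0.lo_lt_hi _ ?open1]
    case open0 => intro i; split_ifs; exacts [isOpen_Iio, isOpen_Ioo]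
    case open1 => intro i; split_ifs; exacts [isOpen_Ioi, isOpen_Ioo]
    refine forall_congr' fun i => ?_
    rcases eq_or_ne i m with rfl | hi
    · simp only [if_true, Domino.hi_eq_lo_add_one h0, Domino.hi_eq_lo_add_one h1]
      exact Ioo_inter_Iio_nonempty_iff _ _
    · rw [if_neg hi, if_neg hi, inter_comm]
  congr 1
  exact propext hmeet

lemma T_neg_stdR (m : Fin 3) (t : Finset Domino) : T (-stdR m) t = T (stdR m) t := by
  simp only [T, tau_neg_stdR]
  exact Finset.sum_comm

lemma T_neg_of_mem_PhiR {u : R3} (hu : u ∈ PhiR) (t : Finset Domino) : T (-u) t = T u t := by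
  obtain ⟨m, rfl | rfl⟩ := hu
  · exact T_neg_stdR m t
  · rw [neg_neg, T_neg_stdR]

theorem statement2_general (t : Finset Domino)
    (k : Fin 3) (u : R3) (hu : u ∈ PhiR) :
    T u (t.image (fun d => d.reflect k)) = - T u t := by
  rw [T_image_reflect]
  rcases reflR_of_mem_PhiR k hu with h | h
  · rw [h]
  · rw [h, T_neg_of_mem_PhiR hu]

theorem statement2 (R : Finset (Fin 3 → ℤ)) (t : Finset Domino) (ht : IsTiling R t)
    (k : Fin 3) (u : R3) (hu : u ∈ PhiR) :
    T u (t.image (fun d => d.reflect k)) = - T u t :=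
  statement2_general t k u hu
end
end

section
/- Let γ be a closed curve made of segments of a region R (each unit piece γ|[k,k+1] is a segment of R), let β ∈ B, and let u = aβ1 + bβ2 + cβ3 with ‖u‖ < 1 and abc ≠ 0. Then the images of γ and of the translate γ + u are disjoint. -/
open scoped BigOperators
noncomputable section

/-!
A lattice segment moves along a single axis, so for two segments some coordinate is constant
on both, and there any point of the first differs from any point of the second by an integer.
Since `β` is a signed permutation of the standard basis, every coordinate of `u` is one of
`±a, ±b, ±c`, hence nonzero, while `‖u‖ < 1` makes it smaller than `1` in absolute value.
-/

lemma Seg.exists_forall_ne_eq (s : Seg) : ∃ j : Fin 3, ∀ i, i ≠ j → s.a i = s.b i := by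
  by_contra! h
  obtain ⟨i, -, hi⟩ := h 0
  obtain ⟨i', hi'i, hi'⟩ := h i
  have hle : |s.a i - s.b i| + |s.a i' - s.b i'| ≤ ∑ j, |s.a j - s.b j| := by
    rw [← Finset.sum_pair (f := fun j => |s.a j - s.b j|) hi'i.symm]
    exact Finset.sum_le_univ_sum_of_nonneg fun _ => abs_nonneg _
  have h1 : 0 < |s.a i - s.b i| := abs_pos.mpr (sub_ne_zero.mpr hi)
  have h2 : 0 < |s.a i' - s.b i'| := abs_pos.mpr (sub_ne_zero.mpr hi')
  have := s.adj
  omega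

lemma Seg.pt_apply_of_eq (s : Seg) (x : ℝ) {i : Fin 3} (h : s.a i = s.b i) :
    s.pt x i = s.a i + 1 / 2 := by
  simp [Seg.pt, cubeCenter, h]

lemma Seg.exists_pt_apply_sub_eq_intCast (s t : Seg) (x y : ℝ) :
    ∃ i : Fin 3, ∃ m : ℤ, s.pt x i - t.pt y i = m := by
  obtain ⟨j, hj⟩ := s.exists_forall_ne_eq
  obtain ⟨j', hj'⟩ := t.exists_forall_ne_eq
  obtain ⟨i, hij, hij'⟩ : ∃ i : Fin 3, i ≠ j ∧ i ≠ j' := by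
    clear hj hj'; revert j j'; decide
  refine ⟨i, s.a i - t.a i, ?_⟩
  rw [s.pt_apply_of_eq x (hj i hij), t.pt_apply_of_eq y (hj' i hij')]
  push_cast
  ring

lemma abs_apply_lt_one_of_sqrt_dot_self_lt_one {u : R3} (hu : Real.sqrt (dot u u) < 1)
    (i : Fin 3) : |u i| < 1 := by
  rw [Real.sqrt_lt' one_pos, one_pow] at hu
  rw [← sq_lt_one_iff_abs_lt_one]
  calc u i ^ 2 = u i * u i := sq _
    _ ≤ dot u u :=
      Finset.single_le_sum (f := fun j => u j * u j) (fun j _ => mul_self_nonneg _)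
        (Finset.mem_univ i)
    _ < 1 := hu

section PhiR

variable {x y z : R3} {j j₁ j₂ j₃ : Fin 3}

lemma apply_eq_zero_of_eq_stdR (hx : x = stdR j ∨ x = -stdR j) {i : Fin 3} (hi : i ≠ j) :
    x i = 0 := by
  rcases hx with rfl | rfl <;> simp [stdR, hi]

lemma apply_self_ne_zero_of_eq_stdR (hx : x = stdR j ∨ x = -stdR j) : x j ≠ 0 := by
  rcases hx with rfl | rfl <;> simp [stdR]

/-- If three vectors of `Φ` missed an axis, the corresponding column of their matrix would
vanish. -/
lemma eq_or_eq_or_eq_of_det3_ne_zero (hx : x = stdR j₁ ∨ x = -stdR j₁)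
    (hy : y = stdR j₂ ∨ y = -stdR j₂) (hz : z = stdR j₃ ∨ z = -stdR j₃)
    (hdet : det3 x y z ≠ 0) (i : Fin 3) : i = j₁ ∨ i = j₂ ∨ i = j₃ := by
  by_contra! h
  obtain ⟨h₁, h₂, h₃⟩ := h
  refine hdet (Matrix.det_eq_zero_of_column_eq_zero i fun k => ?_)
  fin_cases k
  · exact apply_eq_zero_of_eq_stdR hx h₁
  · exact apply_eq_zero_of_eq_stdR hy h₂
  · exact apply_eq_zero_of_eq_stdR hz h₃

lemma IsLatticeBasis.linearCombination_apply_ne_zero {b1 b2 b3 : R3}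
    (hβ : IsLatticeBasis b1 b2 b3) {a b c : ℝ} (ha : a ≠ 0) (hb : b ≠ 0) (hc : c ≠ 0)
    (i : Fin 3) : (a • b1 + b • b2 + c • b3) i ≠ 0 := by
  obtain ⟨⟨j₁, h₁⟩, ⟨j₂, h₂⟩, ⟨j₃, h₃⟩, hdet⟩ := hβ
  have hcover := eq_or_eq_or_eq_of_det3_ne_zero h₁ h₂ h₃ (by rw [hdet]; exact one_ne_zero)
  have hdistinct : j₁ ≠ j₂ ∧ j₁ ≠ j₃ ∧ j₂ ≠ j₃ := by
    clear h₁ h₂ h₃; revert j₁ j₂ j₃; decide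
  obtain ⟨h₁₂, h₁₃, h₂₃⟩ := hdistinct
  simp only [Pi.add_apply, Pi.smul_apply, smul_eq_mul]
  rcases hcover i with rfl | rfl | rfl
  · rw [apply_eq_zero_of_eq_stdR h₂ h₁₂, apply_eq_zero_of_eq_stdR h₃ h₁₃]
    simpa using mul_ne_zero ha (apply_self_ne_zero_of_eq_stdR h₁)
  · rw [apply_eq_zero_of_eq_stdR h₁ h₁₂.symm, apply_eq_zero_of_eq_stdR h₃ h₂₃]
    simpa using mul_ne_zero hb (apply_self_ne_zero_of_eq_stdR h₂)
  · rw [apply_eq_zero_of_eq_stdR h₁ h₁₃.symm, apply_eq_zero_of_eq_stdR h₂ h₂₃.symm]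
    simpa using mul_ne_zero hc (apply_self_ne_zero_of_eq_stdR h₃)

end PhiR

theorem statement9_general (n : ℕ) (γ : Fin n → Seg)
    (b1 b2 b3 : R3) (hβ : IsLatticeBasis b1 b2 b3)
    (a b c : ℝ) (habc : a * b * c ≠ 0)
    (hu : Real.sqrt (dot (a • b1 + b • b2 + c • b3) (a • b1 + b • b2 + c • b3)) < 1) :
    ∀ k l : Fin n, ∀ x ∈ Set.Icc (0:ℝ) 1, ∀ y ∈ Set.Icc (0:ℝ) 1,
      (γ k).pt x ≠ (γ l).pt y + (a • b1 + b • b2 + c • b3) := by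
  intro k l x _ y _ heq
  obtain ⟨⟨ha, hb⟩, hc⟩ := mul_ne_zero_iff.mp habc |>.imp_left mul_ne_zero_iff.mp
  obtain ⟨i, m, hm⟩ := (γ k).exists_pt_apply_sub_eq_intCast (γ l) x y
  have hui : (a • b1 + b • b2 + c • b3) i = m := by
    rw [← hm, heq]
    exact (add_sub_cancel_left ((γ l).pt y i) _).symm
  have hm0 : m = 0 := by
    have := abs_apply_lt_one_of_sqrt_dot_self_lt_one hu i
    rw [hui, ← Int.cast_abs] at this
    exact Int.abs_lt_one_iff.mp (by exact_mod_cast this)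
  exact hβ.linearCombination_apply_ne_zero ha hb hc i (by rw [hui, hm0, Int.cast_zero])

theorem statement9 (R : Finset (Fin 3 → ℤ)) (n : ℕ) (γ : Fin n → Seg)
    (hseg : ∀ k, (γ k).inRegion R)
    (hclosed : IsClosedCurve (fun k => (γ k).toR))
    (b1 b2 b3 : R3) (hβ : IsLatticeBasis b1 b2 b3)
    (a b c : ℝ) (habc : a * b * c ≠ 0)
    (hu : Real.sqrt (dot (a • b1 + b • b2 + c • b3) (a • b1 + b • b2 + c • b3)) < 1) :
    ∀ k l : Fin n, ∀ x ∈ Set.Icc (0:ℝ) 1, ∀ y ∈ Set.Icc (0:ℝ) 1,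
      (γ k).pt x ≠ (γ l).pt y + (a • b1 + b • b2 + c • b3) :=
  statement9_general n γ b1 b2 b3 hβ a b c habc hu
end
end

section
/- Let G be a connected bipartite graph with 2n vertices, n black and n white (n ≥ 1). Then the graph G × I_{2n−1}, the 'prism' of G over the path with 2n−1 vertices, has a perfect matching. -/
open scoped BigOperators
noncomputable section

/-!
Induction on `n`. Every edge of a spanning tree `T` of `G` has exactly one white end, so the `n`
white degrees in `T` sum to `2n - 1` and some white vertex `w` is a leaf of `T`; likewise some
black vertex `b`, and removing both leaves keeps `G` connected. By induction
`(G - w - b) × I_{2n-3}` has a perfect matching. In `G × I_{2n-1}` match the columns of `w` and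
`b` vertically in the bottom `2n - 2` layers, and cover the top two layers along a path `P` from
`w` to `b`: the top layer takes every other edge of `P` starting with the first, the layer below
every other edge of the interior of `P`, and the vertices off `P` are matched vertically.
-/

open Finset Function

namespace SimpleGraph

variable {V W : Type*} {G : SimpleGraph V} {H : SimpleGraph W}

def IsMatchable (G : SimpleGraph V) (s : Set V) : Prop :=
  ∃ M : G.Subgraph, M.IsMatching ∧ M.verts = s

namespace IsMatchable

theorem empty : G.IsMatchable ∅ :=
  ⟨⊥, fun _ h => h.elim, rfl⟩

theorem of_adj {u v : V} (h : G.Adj u v) : G.IsMatchable {u, v} :=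
  ⟨G.subgraphOfAdj h, .subgraphOfAdj h, rfl⟩

theorem union {s t : Set V} (hs : G.IsMatchable s) (ht : G.IsMatchable t) (hst : Disjoint s t) :
    G.IsMatchable (s ∪ t) := by
  obtain ⟨M, hM, rfl⟩ := hs
  obtain ⟨N, hN, rfl⟩ := ht
  exact ⟨M ⊔ N, hM.sup hN (by rwa [hM.support_eq_verts, hN.support_eq_verts]), rfl⟩

theorem iUnion {ι : Type*} {s : ι → Set V} (hs : ∀ i, G.IsMatchable (s i))
    (hd : Pairwise (Disjoint on s)) : G.IsMatchable (⋃ i, s i) := by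
  choose M hM hverts using hs
  refine ⟨⨆ i, M i, Subgraph.IsMatching.iSup hM fun i j hij => ?_, by simp [hverts]⟩
  simpa only [(hM _).support_eq_verts, hverts] using hd hij

theorem image {s : Set V} (hs : G.IsMatchable s) (f : G →g H) (hf : Injective f) :
    H.IsMatchable (f '' s) := by
  obtain ⟨M, hM, rfl⟩ := hs
  exact ⟨M.map f, hM.map f hf, Subgraph.map_verts f M⟩

theorem exists_isPerfectMatching (h : G.IsMatchable Set.univ) :
    ∃ M : G.Subgraph, M.IsPerfectMatching := by
  obtain ⟨M, hM, hverts⟩ := h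
  exact ⟨M, hM, fun v => hverts ▸ Set.mem_univ v⟩

end IsMatchable

-- Both parities are needed: removing the first edge of a path flips the parity of its length.
theorem Walk.IsPath.isMatchable_alternating {u v : V} {p : G.Walk u v} (hp : p.IsPath) :
    (Odd p.length → G.IsMatchable {x | x ∈ p.support}) ∧
      (Even p.length → G.IsMatchable ({x | x ∈ p.support} \ {u})) := by
  induction p with
  | nil =>
    refine ⟨fun h => absurd h (by simp), fun _ => ?_⟩
    convert IsMatchable.empty using 1
    ext; simp
  | @cons u x v h q ih =>
    rw [Walk.cons_isPath_iff] at hp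
    obtain ⟨hodd, heven⟩ := ih hp.1
    refine ⟨fun hlen => ?_, fun hlen => ?_⟩
    · have hq := heven (by simpa [Nat.odd_add_one] using hlen)
      convert (IsMatchable.of_adj h).union hq ?_ using 1
      · ext y
        by_cases hyx : y = x <;> simp [hyx, q.start_mem_support]
      · rw [Set.disjoint_insert_left, Set.disjoint_singleton_left]
        exact ⟨fun hu => hp.2 hu.1, fun hx => hx.2 rfl⟩
    · convert hodd (by simpa [Nat.even_add_one] using hlen) using 1
      ext y
      constructor
      · rintro ⟨hy, hyu : y ≠ u⟩
        simpa [hyu] using hy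
      · intro (hy : y ∈ q.support)
        exact ⟨by simp [hy], fun hyu => hp.2 (hyu ▸ hy)⟩

theorem Walk.IsPath.isMatchable_support_diff_ends {u v : V} {p : G.Walk u v} (hp : p.IsPath)
    (hodd : Odd p.length) : G.IsMatchable ({x | x ∈ p.support} \ {u, v}) := by
  cases p with
  | nil => simp at hodd
  | cons h q =>
    rw [Walk.cons_isPath_iff] at hp
    convert hp.1.reverse.isMatchable_alternating.2 (by simpa [Nat.odd_add_one] using hodd) using 1
    ext y
    constructor
    · rintro ⟨hy, hyuv⟩
      simp only [Set.mem_insert_iff, Set.mem_singleton_iff, not_or] at hyuv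
      simpa [hyuv.1, hyuv.2] using hy
    · rintro ⟨hy, hyv⟩
      have hy : y ∈ q.support := by simpa using hy
      exact ⟨by simp [hy], by rintro (rfl | rfl) <;> simp_all⟩

section Prism

variable {m : ℕ}

theorem prism_adj_of_succ_eq (v : V) {i j : Fin m} (h : i.val + 1 = j.val) :
    (prism G m).Adj (v, i) (v, j) :=
  Or.inl ⟨rfl, Or.inl h⟩

def prismLayer (G : SimpleGraph V) (m : ℕ) (j : Fin m) : G →g prism G m where
  toFun v := (v, j)
  map_rel' h := Or.inr ⟨h, rfl⟩

@[simp]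
theorem prismLayer_apply (j : Fin m) (v : V) : prismLayer G m j v = (v, j) :=
  rfl

theorem prismLayer_injective (j : Fin m) : Injective (prismLayer G m j) :=
  fun _ _ h => congrArg Prod.fst h

def prismInduce (s : Set V) {m' : ℕ} (h : m ≤ m') : prism (G.induce s) m →g prism G m' where
  toFun x := (x.1, Fin.castLE h x.2)
  map_rel' := by
    rintro a b (⟨hab, hj⟩ | ⟨hab, hj⟩)
    · exact Or.inl ⟨congrArg Subtype.val hab, hj⟩
    · exact Or.inr ⟨hab, congrArg (Fin.castLE h) hj⟩

theorem prismInduce_injective (s : Set V) {m' : ℕ} (h : m ≤ m') :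
    Injective (prismInduce (G := G) s h) := by
  rintro ⟨a, i⟩ ⟨b, j⟩ hab
  simp only [prismInduce, RelHom.coeFn_mk, Prod.mk.injEq, Fin.castLE_inj] at hab
  rw [Subtype.ext hab.1, hab.2]

theorem range_prismInduce (s : Set V) {m' : ℕ} (h : m ≤ m') :
    Set.range (prismInduce (G := G) s h) = {x | x.1 ∈ s ∧ x.2.val < m} := by
  ext ⟨v, i⟩
  constructor
  · rintro ⟨⟨⟨v, hv⟩, j⟩, hx⟩
    simp only [prismInduce, RelHom.coeFn_mk, Prod.mk.injEq] at hx
    obtain ⟨rfl, rfl⟩ := hx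
    exact ⟨hv, j.isLt⟩
  · rintro ⟨hv, hi⟩
    exact ⟨(⟨v, hv⟩, ⟨i, hi⟩), rfl⟩

theorem isMatchable_prism_rungs (X : Set V) {j : ℕ} (hj : j + 1 < m) :
    (prism G m).IsMatchable {x | x.1 ∈ X ∧ (x.2.val = j ∨ x.2.val = j + 1)} := by
  convert IsMatchable.iUnion (ι := X)
    (s := fun v => {(v.1, (⟨j, by omega⟩ : Fin m)), (v.1, ⟨j + 1, hj⟩)})
    (fun v => .of_adj (prism_adj_of_succ_eq _ rfl)) ?_ using 1
  · ext ⟨v, i⟩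
    simp [Fin.ext_iff, ← and_or_left]
  · intro v v' hvv'
    simpa [Set.disjoint_left, Subtype.ext_iff] using hvv'

theorem isMatchable_prism_column (X : Set V) (a : ℕ) {k : ℕ} (hk : a + 2 * k ≤ m) :
    (prism G m).IsMatchable {x | x.1 ∈ X ∧ a ≤ x.2.val ∧ x.2.val < a + 2 * k} := by
  induction k with
  | zero =>
    convert IsMatchable.empty using 1
    ext; simp
  | succ k ih =>
    convert (ih (by omega)).union (isMatchable_prism_rungs X (j := a + 2 * k) (by omega)) ?_
      using 1
    · ext ⟨v, i⟩
      by_cases hv : v ∈ X <;> simp only [Set.mem_ofPred_eq, Set.mem_union, hv, true_and,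
        false_and, or_false]
      omega
    · rw [Set.disjoint_left]
      rintro x ⟨-, -, hx⟩ ⟨-, hx'⟩
      omega

theorem Walk.IsPath.isMatchable_prism_ladder {w b : V} {P : G.Walk w b} (hP : P.IsPath)
    (hodd : Odd P.length) {j : ℕ} (hj : j + 1 < m) :
    (prism G m).IsMatchable {x | x.2.val = j + 1 ∨ x.2.val = j ∧ x.1 ∉ ({w, b} : Set V)} := by
  have htop := (hP.isMatchable_alternating.1 hodd).image _ (prismLayer_injective ⟨j + 1, hj⟩)
  have hmid := (hP.isMatchable_support_diff_ends hodd).image _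
    (prismLayer_injective (⟨j, by omega⟩ : Fin m))
  have hrest := isMatchable_prism_rungs (G := G) {v | v ∉ P.support} hj
  convert (htop.union hmid ?_).union hrest ?_ using 1
  · ext ⟨v, i⟩
    have hw := P.start_mem_support
    have hb := P.end_mem_support
    simp only [Set.mem_ofPred_eq, Set.mem_union, Set.mem_image, Set.mem_sdiff, prismLayer_apply,
      Prod.mk.injEq, Fin.ext_iff]
    grind
  · rw [Set.disjoint_left]
    rintro _ ⟨v, -, rfl⟩ ⟨v', -, h⟩
    simp [Fin.ext_iff] at h
  · rw [Set.disjoint_left]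
    rintro _ (⟨v, hv, rfl⟩ | ⟨v, hv, rfl⟩) ⟨hv', -⟩
    · exact hv' hv
    · exact hv' hv.1

theorem Walk.IsPath.isMatchable_univ_prism {w b : V} {P : G.Walk w b} (hP : P.IsPath)
    (hodd : Odd P.length) {n : ℕ} (hn : 1 ≤ n)
    (h : (prism (G.induce {w, b}ᶜ) (2 * n - 1)).IsMatchable Set.univ) :
    (prism G (2 * n + 1)).IsMatchable Set.univ := by
  have hlow := h.image _ (prismInduce_injective _ (by omega : 2 * n - 1 ≤ 2 * n + 1))
  rw [Set.image_univ, range_prismInduce] at hlow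
  have hcol := isMatchable_prism_column (G := G) (m := 2 * n + 1) {w, b} 0 (k := n) (by omega)
  have hladder := hP.isMatchable_prism_ladder hodd (m := 2 * n + 1) (j := 2 * n - 1) (by omega)
  convert (hlow.union hcol ?_).union hladder ?_ using 1
  · ext ⟨v, i⟩
    by_cases hv : v ∈ ({w, b} : Set V) <;> simp only [Set.mem_univ, Set.mem_union,
      Set.mem_ofPred_eq, Set.mem_compl_iff, hv, true_and, false_and, not_true, not_false_iff,
      or_false, false_or, and_true, and_false, true_iff] <;> omega
  · rw [Set.disjoint_left]
    rintro x ⟨hx, -⟩ ⟨hx', -⟩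
    exact hx hx'
  · rw [Set.disjoint_left]
    rintro x (⟨-, hx⟩ | ⟨hwb, -, hx⟩) (hx' | ⟨hx', hwb'⟩)
    all_goals first | omega | exact hwb' hwb

end Prism

theorem IsTree.exists_subsingleton_neighborSet [Fintype V] {T : SimpleGraph V} (hT : T.IsTree)
    (C : T.Coloring Bool) (m : Bool) (hcard : #{v | C v ≠ m} ≤ #{v | C v = m}) :
    ∃ v, C v = m ∧ (T.neighborSet v).Subsingleton := by
  classical
  have hbip : T.IsBipartiteWith ↑({v | C v = m} : Finset V) ↑({v | C v ≠ m} : Finset V) :=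
    { disjoint := by simp [Set.disjoint_left]
      mem_of_adj := fun v w h => by
        have := C.valid h
        simp only [coe_filter, mem_univ, true_and, Set.mem_ofPred_eq]
        cases hv : C v <;> cases hw : C w <;> cases m <;> simp_all }
  have hsum := isBipartiteWith_sum_degrees_eq_card_edges hbip
  have hedges := hT.card_edgeFinset
  have hsplit := card_filter_add_card_filter_not (s := univ) (fun v => C v = m)
  by_contra! hall
  have hdeg : ∀ v ∈ ({v | C v = m} : Finset V), 2 ≤ T.degree v := by
    intro v hv
    obtain ⟨a, ha, b, hb, hab⟩ := hall v (by simpa using hv)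
    rw [← card_neighborFinset_eq_degree]
    exact one_lt_card.mpr
      ⟨a, (mem_neighborFinset _ _ _).mpr ha, b, (mem_neighborFinset _ _ _).mpr hb, hab⟩
  have := card_nsmul_le_sum _ _ 2 hdeg
  rw [smul_eq_mul] at this
  rw [card_univ] at hsplit
  simp only [ne_eq] at hcard
  omega

theorem Connected.exists_preconnected_induce_compl_pair [Fintype V] (hG : G.Connected)
    (C : G.Coloring Bool) (hcard : #{v | C v = true} = #{v | C v = false}) :
    ∃ w b, C w = true ∧ C b = false ∧ (G.induce {w, b}ᶜ).Preconnected := by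
  obtain ⟨T, hTG, hT⟩ := hG.exists_isTree_le
  let CT : T.Coloring Bool := C.comp (Hom.ofLE hTG)
  obtain ⟨w, hw, hwleaf⟩ := hT.exists_subsingleton_neighborSet CT true (by simp [CT, hcard])
  obtain ⟨b, hb, hbleaf⟩ := hT.exists_subsingleton_neighborSet CT false (by simp [CT, hcard])
  have hle : T.induce {w, b}ᶜ ≤ G.induce {w, b}ᶜ := fun _ _ h => hTG h
  refine ⟨w, b, hw, hb, Preconnected.mono hle ?_⟩
  refine hT.preconnected.induce_of_degree_eq_one fun v hv => ?_
  simp only [Set.mem_compl_iff, Set.mem_insert_iff, Set.mem_singleton_iff, not_or, not_and_or,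
    not_not] at hv
  rcases hv with rfl | rfl
  exacts [hwleaf, hbleaf]

theorem Coloring.card_induce_compl_pair [Fintype V] [DecidableEq V] (C : G.Coloring Bool)
    {w b : V} (hw : C w = true) (hb : C b = false) (m : Bool) :
    #{v | C.comp (Embedding.induce {w, b}ᶜ).toHom v = m} + 1 = #{v | C v = m} := by
  have hsub : #{v | C.comp (Embedding.induce {w, b}ᶜ).toHom v = m}
      = #{v | v ∉ ({w, b} : Set V) ∧ C v = m} := by
    rw [← card_map (Embedding.subtype _)]
    congr 1
    ext v
    simp [and_comm]
  rw [hsub]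
  cases m
  · rw [← card_erase_add_one (s := {v | C v = false}) (a := b) (by simpa using hb)]
    congr 2; ext v; simp only [mem_filter, mem_univ, true_and, mem_erase]; grind
  · rw [← card_erase_add_one (s := {v | C v = true}) (a := w) (by simpa using hw)]
    congr 2; ext v; simp only [mem_filter, mem_univ, true_and, mem_erase]; grind

theorem Connected.isMatchable_univ_prism_one [Fintype V] (hG : G.Connected)
    (C : G.Coloring Bool) (htrue : #{v | C v = true} = 1) (hfalse : #{v | C v = false} = 1) :
    (prism G 1).IsMatchable Set.univ := by
  obtain ⟨w, hw⟩ := card_eq_one.mp htrue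
  obtain ⟨b, hb⟩ := card_eq_one.mp hfalse
  have hV : ∀ v, v = w ∨ v = b := by
    intro v
    have hv : v ∈ ({u | C u = C v} : Finset V) := by simp
    cases h : C v
    · rw [h, hb] at hv; exact .inr (mem_singleton.mp hv)
    · rw [h, hw] at hv; exact .inl (mem_singleton.mp hv)
  have hwC : w ∈ ({v | C v = true} : Finset V) := hw ▸ mem_singleton_self w
  have hbC : b ∈ ({v | C v = false} : Finset V) := hb ▸ mem_singleton_self b
  simp only [mem_filter, mem_univ, true_and] at hwC hbC
  have hwb : w ≠ b := ne_of_apply_ne C (by simp [hwC, hbC])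
  obtain ⟨P, hP⟩ := hG.exists_isPath w b
  have hnil : ¬ P.Nil := Walk.not_nil_of_ne hwb
  have hadj : G.Adj w b := by
    have h := P.adj_snd hnil
    rcases hV P.snd with hs | hs
    · exact absurd hs (G.ne_of_adj h).symm
    · rwa [hs] at h
  convert IsMatchable.of_adj (G := prism G 1) (u := (w, 0)) (v := (b, 0)) (Or.inr ⟨hadj, rfl⟩)
  ext ⟨v, i⟩
  rcases hV v with rfl | rfl <;> simp [Fin.fin_one_eq_zero i]

theorem Connected.isMatchable_univ_prism [Fintype V] [DecidableEq V] (hG : G.Connected)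
    (C : G.Coloring Bool) {n : ℕ} (hn : 1 ≤ n) (htrue : #{v | C v = true} = n)
    (hfalse : #{v | C v = false} = n) : (prism G (2 * n - 1)).IsMatchable Set.univ := by
  induction n, hn using Nat.le_induction generalizing V with
  | base => exact hG.isMatchable_univ_prism_one C htrue hfalse
  | succ n hn ih =>
    obtain ⟨w, b, hw, hb, hpre⟩ :=
      hG.exists_preconnected_induce_compl_pair C (htrue.trans hfalse.symm)
    obtain ⟨P, hP⟩ := hG.exists_isPath w b
    have hodd : Odd P.length := (C.odd_length_iff_not_congr P).mpr (by simp [hw, hb])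
    have htrue' := C.card_induce_compl_pair hw hb true
    have hfalse' := C.card_induce_compl_pair hw hb false
    set C' := C.comp (Embedding.induce {w, b}ᶜ).toHom
    obtain ⟨v, -⟩ := card_pos.mp (by omega : 0 < #{v | C' v = true})
    have hconn : (G.induce {w, b}ᶜ).Connected := (connected_iff _).mpr ⟨hpre, ⟨v⟩⟩
    rw [show 2 * (n + 1) - 1 = 2 * n + 1 by omega]
    exact hP.isMatchable_univ_prism hodd hn (ih hconn C' (by omega) (by omega))

end SimpleGraph

theorem statement12 {V : Type} [Fintype V] [DecidableEq V]
    (G : SimpleGraph V) (hconn : G.Connected)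
    (c : V → Bool) (hproper : ∀ u v, G.Adj u v → c u ≠ c v)
    (n : ℕ) (hn : 1 ≤ n)
    (hW : (Finset.univ.filter (fun v => c v = true)).card = n)
    (hB : (Finset.univ.filter (fun v => c v = false)).card = n) :
    ∃ M : (prism G (2*n - 1)).Subgraph, M.IsPerfectMatching :=
  (hconn.isMatchable_univ_prism (.mk c (hproper _ _)) hn hW hB).exists_isPerfectMatching
end
end

section
/- Let w ∈ {e1,e2,e3}, let R be a w-pseudocylinder of even depth, t a tiling of R, and t_base the tiling of R in which every dimer is parallel to w. If Γ*(t, t_base) = {γ1,…,γm} is the set of nontrivial closed curves formed by t ∪ (−t_base), then T^w(t) = Σ_i T^w(γi) + 2 Σ_{i<j} Link(γi, γj). -/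
open scoped BigOperators
noncomputable section

/-!
Dimers of `tbase`, and their reversals, are parallel to `w`, and `det3 _ _ w` vanishes as soon
as one of its first two rows is `± w`: such segments neither exert nor feel any `w`-effect.
So the pretwist, a bilinear form on multisets of segments, sees `t` only through `t \ tbase`,
and adding the reversed dimers of `tbase \ t` does not change it; by `hdec` it is then the
pretwist of the union of the curves. Expanding it over pairs of curves and pairing the `(i, j)`
and `(j, i)` terms for `i < j` turns the off-diagonal part into linking numbers.
-/

lemma det3_eq_zero_of_fst_eq_or_eq_neg {x b u : R3} (h : x = u ∨ x = -u) : det3 x b u = 0 := by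
  rcases h with rfl | rfl <;> simp [det3, Matrix.det_fin_three] <;> ring

lemma det3_eq_zero_of_snd_eq_or_eq_neg {a x u : R3} (h : x = u ∨ x = -u) : det3 a x u = 0 := by
  rcases h with rfl | rfl <;> simp [det3, Matrix.det_fin_three] <;> ring

lemma tauR_eq_zero_of_left_parallel {u : R3} {l0 : RSeg} (l1 : RSeg)
    (h : l0.v = u ∨ l0.v = -u) : tauR u l0 l1 = 0 := by
  simp [tauR, det3_eq_zero_of_snd_eq_or_eq_neg h]

lemma tauR_eq_zero_of_right_parallel {u : R3} (l0 : RSeg) {l1 : RSeg}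
    (h : l1.v = u ∨ l1.v = -u) : tauR u l0 l1 = 0 := by
  simp [tauR, det3_eq_zero_of_fst_eq_or_eq_neg h]

lemma RSeg.reverse_v (l : RSeg) : l.reverse.v = -l.v := rfl

lemma Domino.dimer_v (d : Domino) : d.dimer.v = d.v := by
  unfold Domino.dimer; split_ifs <;> rfl

/-- `T^u(A, B)` for multisets `A`, `B` of segments. -/
def segTwist (u : R3) (A B : Multiset RSeg) : ℝ :=
  (A.map fun l0 => (B.map (tauR u l0)).sum).sum

section segTwist

variable {u : R3} {ι : Type*}

lemma segTwist_sum_left (s : Finset ι) (A : ι → Multiset RSeg) (B : Multiset RSeg) :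
    segTwist u (∑ i ∈ s, A i) B = ∑ i ∈ s, segTwist u (A i) B :=
  map_sum (Multiset.sumAddMonoidHom.comp (Multiset.mapAddMonoidHom _)) A s

lemma segTwist_sum_right (A : Multiset RSeg) (s : Finset ι) (B : ι → Multiset RSeg) :
    segTwist u A (∑ i ∈ s, B i) = ∑ i ∈ s, segTwist u A (B i) := by
  have hmap : ∀ l0,
      ((∑ i ∈ s, B i).map (tauR u l0)).sum = ∑ i ∈ s, ((B i).map (tauR u l0)).sum :=
    fun l0 => map_sum (Multiset.sumAddMonoidHom.comp (Multiset.mapAddMonoidHom _)) B s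
  simp only [segTwist, hmap]
  exact Multiset.sum_map_sum_map _ _

lemma segTwist_map_univ {n n' : ℕ} (γ : Fin n → RSeg) (δ : Fin n' → RSeg) :
    segTwist u (Finset.univ.val.map γ) (Finset.univ.val.map δ) = Tfam u γ δ := by
  simp only [segTwist, Tfam, Multiset.map_map, Function.comp_def, Finset.sum_map_val]

lemma segTwist_add_parallel {A C : Multiset RSeg} (hC : ∀ l ∈ C, l.v = u ∨ l.v = -u) :
    segTwist u (A + C) (A + C) = segTwist u A A := by
  have hleft : (C.map fun l0 => (A.map (tauR u l0)).sum).sum = 0 :=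
    Multiset.sum_eq_zero fun _ hx => by
      obtain ⟨l0, hl0, rfl⟩ := Multiset.mem_map.1 hx
      exact Multiset.sum_eq_zero fun _ hy => by
        obtain ⟨l1, -, rfl⟩ := Multiset.mem_map.1 hy
        exact tauR_eq_zero_of_left_parallel l1 (hC l0 hl0)
  have hright : ∀ l0, (C.map (tauR u l0)).sum = 0 := fun l0 =>
    Multiset.sum_eq_zero fun _ hx => by
      obtain ⟨l1, hl1, rfl⟩ := Multiset.mem_map.1 hx
      exact tauR_eq_zero_of_right_parallel l0 (hC l1 hl1)
  simp only [segTwist, Multiset.map_add, Multiset.sum_add, hright, add_zero, hleft]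

end segTwist

lemma Tdim_eq_segTwist (u : R3) (t : Finset Domino) :
    Tdim u t = segTwist u (t.val.map Domino.dimer) (t.val.map Domino.dimer) := by
  simp only [Tdim, segTwist, Multiset.map_map, Function.comp_def, Finset.sum_map_val]

lemma Tdim_eq_segTwist_sdiff_of_parallel {u : R3} (t : Finset Domino) {s : Finset Domino}
    (hs : ∀ d ∈ s, d.v = u ∨ d.v = -u) :
    Tdim u t = segTwist u ((t \ s).val.map Domino.dimer) ((t \ s).val.map Domino.dimer) := by
  have hsplit : t.val = (t \ s).val + (t ∩ s).val := by
    rw [← Finset.disjUnion_val _ _ (Finset.disjoint_sdiff_inter t s), Finset.disjUnion_eq_union,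
      Finset.sdiff_union_inter]
  have hparallel : ∀ l ∈ (t ∩ s).val.map Domino.dimer, l.v = u ∨ l.v = -u := by
    intro l hl
    obtain ⟨d, hd, rfl⟩ := Multiset.mem_map.1 hl
    rw [Domino.dimer_v]
    exact hs d (Finset.mem_inter.1 hd).2
  rw [Tdim_eq_segTwist, hsplit, Multiset.map_add, segTwist_add_parallel hparallel]

lemma sum_sum_eq_sum_diag_add_sum_lt {ι M : Type*} [Fintype ι] [LinearOrder ι] [AddCommMonoid M]
    (F : ι → ι → M) :
    ∑ i, ∑ j, F i j = ∑ i, F i i + ∑ i, ∑ j, if i < j then F i j + F j i else 0 := by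
  have htrichotomy : ∀ i j, F i j
      = (if i = j then F i j else 0) + (if i < j then F i j else 0)
        + if j < i then F i j else 0 := by
    intro i j
    rcases lt_trichotomy i j with h | rfl | h
    · simp [h, h.ne, h.not_gt]
    · simp
    · simp [h, h.ne', h.not_gt]
  have hswap :
      ∑ i, ∑ j, (if j < i then F i j else 0) = ∑ i, ∑ j, if i < j then F j i else 0 :=
    Finset.sum_comm
  calc ∑ i, ∑ j, F i j
      = ∑ i, ∑ j, ((if i = j then F i j else 0) + (if i < j then F i j else 0)
          + if j < i then F i j else 0) := by simp_rw [← htrichotomy]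
    _ = _ := by
      simp only [Finset.sum_add_distrib, hswap, Finset.sum_ite_eq, Finset.mem_univ, if_true,
        add_assoc, ite_add_zero]

theorem statement14_general (k : Fin 3)
    (t tbase : Finset Domino)
    (hbase : ∀ d ∈ tbase, d.v = stdR k ∨ d.v = -(stdR k))
    (m : ℕ) (len : Fin m → ℕ) (γ : ∀ i, Fin (len i) → RSeg)
    (hdec : (∑ i : Fin m, Multiset.map (γ i) Finset.univ.val)
        = Multiset.map Domino.dimer (t \ tbase).val
          + Multiset.map (fun d => d.dimer.reverse) ((tbase \ t).val)) :
    Tdim (stdR k) t = (∑ i, Tfam (stdR k) (γ i) (γ i))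
      + 2 * ∑ i : Fin m, ∑ j : Fin m,
          if i < j then LinkAlong (stdR k) (γ i) (γ j) else 0 := by
  have hreversed : ∀ l ∈ (tbase \ t).val.map (fun d => d.dimer.reverse),
      l.v = stdR k ∨ l.v = -stdR k := by
    intro l hl
    obtain ⟨d, hd, rfl⟩ := Multiset.mem_map.1 hl
    rcases hbase d (Finset.mem_sdiff.1 hd).1 with h | h <;> simp [RSeg.reverse_v, Domino.dimer_v, h]
  calc Tdim (stdR k) t
      = segTwist (stdR k) (∑ i, Finset.univ.val.map (γ i))
          (∑ i, Finset.univ.val.map (γ i)) := by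
        rw [Tdim_eq_segTwist_sdiff_of_parallel t hbase, hdec, segTwist_add_parallel hreversed]
    _ = ∑ i, ∑ j, Tfam (stdR k) (γ i) (γ j) := by
        rw [segTwist_sum_left]
        simp only [segTwist_sum_right, segTwist_map_univ]
    _ = _ := by
        rw [sum_sum_eq_sum_diag_add_sum_lt]
        simp only [Finset.mul_sum, LinkAlong, mul_ite, mul_zero,
          mul_div_cancel₀ _ (two_ne_zero' ℝ)]

theorem statement14 (R : Finset (Fin 3 → ℤ)) (k : Fin 3) (N : ℕ) (hN : 0 < N)
    (hR : IsPseudocylinder R k (2*N))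
    (t tbase : Finset Domino) (ht : IsTiling R t) (htb : IsTiling R tbase)
    (hbase : ∀ d ∈ tbase, d.v = stdR k ∨ d.v = -(stdR k))
    (m : ℕ) (len : Fin m → ℕ) (γ : ∀ i, Fin (len i) → RSeg)
    (hcl : ∀ i, IsClosedCurve (γ i)) (hsim : ∀ i, IsSimpleCurve (γ i))
    (hdec : (∑ i : Fin m, Multiset.map (γ i) Finset.univ.val)
        = Multiset.map Domino.dimer (t \ tbase).val
          + Multiset.map (fun d => d.dimer.reverse) ((tbase \ t).val)) :
    Tdim (stdR k) t = (∑ i, Tfam (stdR k) (γ i) (γ i))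
      + 2 * ∑ i : Fin m, ∑ j : Fin m,
          if i < j then LinkAlong (stdR k) (γ i) (γ j) else 0 :=
  statement14_general k t tbase hbase m len γ hdec
end
end
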